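/- arXiv:math/0702858 — 6 statements merged into one kernel-verified Lean document; each statement's English description precedes it below -/
import Mathlib

section
/- Let M be an additive commutative monoid with a linear order in which 0 is the least element and addition is monotone in each argument. Consider finitely supported sequences ℕ → M with the lexicographic order: A < B iff A ≠ B and at the smallest index n with A n ≠ B n one has A n < B n. Then pointwise addition of such sequences is monotone for the lexicographic order — i.e., A ≤ B and C ≤ D imply A + C ≤ B + D — if and only if addition in M strictly preserves strict inequality, i.e., for all a, b, c, d in M, a < b and c ≤ d imply a + c < b + d. -/
/-!
Strict monotonicity of `+` in a linear order is the same as `M` being an ordered cancellative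
monoid, and this property passes to the lexicographic order on `ℕ → M`
(`Pi.Lex.isOrderedCancelAddMonoid`).
Conversely, if `a < b` but `a + c` is not below `b + d`, then `(a, b, 0, …) ≤ (b, a, 0, …)` and
`(c, 0, …) ≤ (d, 0, …)`, while in the sums the first entries force the comparison to be decided
at index `1`, where `b > a` puts it the wrong way round.
-/

/-- A sequence is finitely supported if it is eventually zero. -/
def FinSupported {M : Type*} [Zero M] (A : ℕ → M) : Prop :=
  ∃ N, ∀ n, N ≤ n → A n = 0

/-- The lexicographic order on sequences: `A ≤ B` iff `A = B` or at the smallest index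
where they differ, the entry of `A` is smaller. -/
def LexLe {M : Type*} [LinearOrder M] (A B : ℕ → M) : Prop :=
  A = B ∨ ∃ n, (∀ m, m < n → A m = B m) ∧ A n < B n

section LexLe

variable {M : Type*} [LinearOrder M]

theorem lexLe_iff_toLex_le {A B : ℕ → M} : LexLe A B ↔ toLex A ≤ toLex B := by
  rw [le_iff_eq_or_lt, toLex_inj]
  rfl

theorem LexLe.add [AddCommMonoid M] [IsOrderedCancelAddMonoid M] {A B C D : ℕ → M}
    (hAB : LexLe A B) (hCD : LexLe C D) : LexLe (A + C) (B + D) := by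
  rw [lexLe_iff_toLex_le] at *
  exact add_le_add hAB hCD

theorem isOrderedCancelAddMonoid_of_add_lt_add [AddCommMonoid M]
    (h : ∀ a b c d : M, a < b → c ≤ d → a + c < b + d) : IsOrderedCancelAddMonoid M where
  add_le_add_left a b hab c := by
    rcases hab.eq_or_lt with rfl | hlt
    · exact le_rfl
    · exact (h a b c c hlt le_rfl).le
  le_of_add_le_add_left a b c habc := by
    by_contra! hcb
    have := h c b a a hcb le_rfl
    rw [add_comm c, add_comm b] at this
    exact this.not_ge habc

end LexLe

section PairSeq

variable {M : Type*}

def pairSeq [Zero M] (x y : M) : ℕ → M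
  | 0 => x
  | 1 => y
  | _ + 2 => 0

theorem pairSeq_finSupported [Zero M] (x y : M) : FinSupported (pairSeq x y) :=
  ⟨2, fun n hn => by
    obtain ⟨k, rfl⟩ := Nat.exists_eq_add_of_le' hn
    rfl⟩

theorem pairSeq_add [AddZeroClass M] (x y x' y' : M) :
    pairSeq x y + pairSeq x' y' = pairSeq (x + x') (y + y') := by
  funext n
  rcases n with _ | _ | n
  · rfl
  · rfl
  · exact add_zero 0

variable [Zero M] [LinearOrder M]

theorem lexLe_pairSeq_of_lt {x x' : M} (y y' : M) (h : x < x') :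
    LexLe (pairSeq x y) (pairSeq x' y') :=
  Or.inr ⟨0, fun _ hm => absurd hm (Nat.not_lt_zero _), h⟩

theorem lexLe_pairSeq_of_le {x x' : M} (y : M) (h : x ≤ x') :
    LexLe (pairSeq x y) (pairSeq x' y) := by
  rcases h.eq_or_lt with rfl | hlt
  · exact Or.inl rfl
  · exact lexLe_pairSeq_of_lt y y hlt

theorem lt_of_lexLe_pairSeq {x y x' y' : M} (h : LexLe (pairSeq x y) (pairSeq x' y'))
    (hy : y' < y) : x < x' := by
  rcases h with heq | ⟨n, -, hn⟩
  · exact absurd (congrFun heq 1) hy.ne'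
  · rcases n with _ | _ | n
    · exact hn
    · exact absurd hn hy.not_gt
    · exact absurd hn (lt_irrefl 0)

end PairSeq

theorem add_lt_add_of_forall_lexLe_add {M : Type*} [AddZeroClass M] [LinearOrder M]
    (h : ∀ A B C D : ℕ → M, FinSupported A → FinSupported B → FinSupported C →
      FinSupported D → LexLe A B → LexLe C D → LexLe (A + C) (B + D))
    {a b c d : M} (hab : a < b) (hcd : c ≤ d) : a + c < b + d := by
  have key := h (pairSeq a b) (pairSeq b a) (pairSeq c 0) (pairSeq d 0)
    (pairSeq_finSupported a b) (pairSeq_finSupported b a) (pairSeq_finSupported c 0)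
    (pairSeq_finSupported d 0) (lexLe_pairSeq_of_lt b a hab) (lexLe_pairSeq_of_le 0 hcd)
  rw [pairSeq_add, pairSeq_add] at key
  exact lt_of_lexLe_pairSeq key (by simpa only [add_zero] using hab)

theorem pointwise_add_lex_monotone_iff_general {M : Type*} [AddCommMonoid M] [LinearOrder M] :
    (∀ A B C D : ℕ → M, FinSupported A → FinSupported B → FinSupported C → FinSupported D →
        LexLe A B → LexLe C D → LexLe (A + C) (B + D)) ↔
      (∀ a b c d : M, a < b → c ≤ d → a + c < b + d) := by
  refine ⟨fun h a b c d => add_lt_add_of_forall_lexLe_add h, fun h A B C D _ _ _ _ hAB hCD => ?_⟩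
  have := isOrderedCancelAddMonoid_of_add_lt_add h
  exact hAB.add hCD

/-- For `M` a linearly ordered additive commutative monoid with `0` least and
addition monotone in each argument, pointwise addition of finitely supported sequences is
monotone for the lexicographic order iff addition in `M` strictly preserves strict
inequality. -/
theorem pointwise_add_lex_monotone_iff {M : Type*} [AddCommMonoid M] [LinearOrder M]
    (hbot : ∀ a : M, 0 ≤ a)
    (hmono_left : ∀ a b c : M, a ≤ b → a + c ≤ b + c)
    (hmono_right : ∀ a b c : M, a ≤ b → c + a ≤ c + b) :
    (∀ A B C D : ℕ → M, FinSupported A → FinSupported B → FinSupported C → FinSupported D →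
        LexLe A B → LexLe C D → LexLe (A + C) (B + D)) ↔
      (∀ a b c d : M, a < b → c ≤ d → a + c < b + d) :=
  pointwise_add_lex_monotone_iff_general
end

section
/- Let M be a linearly ordered additive commutative monoid in which addition is strictly monotone (a < b implies a + c < b + c). For a tuple X : Fin n → M let s(X) denote its nonincreasing rearrangement. Then for all A, B : Fin n → M, s(A + B) ≤ s(A) + s(B), where + is pointwise addition and tuples Fin n → M are compared in the lexicographic order (earlier indices have precedence). -/
/-- The nonincreasing rearrangement of a tuple. -/
noncomputable def sortDesc {α : Type*} [LinearOrder α] {n : ℕ} (X : Fin n → α) : Fin n → α :=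
  X ∘ Tuple.sort (fun i => OrderDual.toDual (X i))

/-- The lexicographic order on tuples `Fin n → α`, earlier indices having precedence:
`A ≤ B` iff `A = B` or at the smallest index where they differ, the entry of `A` is
smaller. -/
def LexLeFin {α : Type*} [LinearOrder α] {n : ℕ} (A B : Fin n → α) : Prop :=
  A = B ∨ ∃ i, (∀ j, j < i → A j = B j) ∧ A i < B i


/-!
Among all pairs of permutations `(π, ρ)`, pick one for which `A ∘ π + B ∘ ρ` is lexicographically
largest. If `A ∘ π` were not nonincreasing, swapping an out-of-order pair `i < j` would raise
the entry at `i` and leave earlier entries alone, contradicting maximality; likewise for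
`B ∘ ρ`. So the maximum is `s(A) + s(B)`, and it dominates `s(A + B) = A ∘ σ + B ∘ σ`.
-/

open Equiv

section SwapLex

variable {ι M : Type*} [LinearOrder ι] [AddCommMonoid M] [LinearOrder M]

theorem toLex_add_lt_toLex_comp_swap_add (hstrict : ∀ a b c : M, a < b → a + c < b + c)
    {f g : ι → M} {i j : ι} (hij : i < j) (hf : f i < f j) :
    toLex (f + g) < toLex (f ∘ swap i j + g) := by
  refine ⟨i, fun k hk => ?_, ?_⟩
  · simp [swap_apply_of_ne_of_ne hk.ne (hk.trans hij).ne]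
  · simpa using hstrict _ _ (g i) hf

theorem antitone_of_forall_toLex_comp_swap_add_le
    (hstrict : ∀ a b c : M, a < b → a + c < b + c) {f g : ι → M}
    (hmax : ∀ i j, toLex (f ∘ swap i j + g) ≤ toLex (f + g)) : Antitone f := by
  intro i j hij
  by_contra! hf
  have hij' : i < j := hij.lt_of_ne (by rintro rfl; exact hf.false)
  exact (hmax i j).not_gt (toLex_add_lt_toLex_comp_swap_add hstrict hij' hf)

end SwapLex

theorem comp_eq_sortDesc_of_antitone {M : Type*} [LinearOrder M] {n : ℕ} {A : Fin n → M}
    {π : Perm (Fin n)} (h : Antitone (A ∘ π)) : A ∘ π = sortDesc A :=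
  (Tuple.comp_sort_eq_comp_iff_monotone (f := fun i => OrderDual.toDual (A i))).2 h.dual_right

theorem lexLeFin_of_toLex_le {α : Type*} [LinearOrder α] {n : ℕ} {A B : Fin n → α}
    (h : toLex A ≤ toLex B) : LexLeFin A B :=
  h.lt_or_eq.symm

/-- the triangle inequality for sorting: in a linearly ordered additive
commutative monoid with strictly monotone addition, `s(A + B) ≤ s(A) + s(B)`
lexicographically, where `s` is the nonincreasing rearrangement. -/
theorem sortDesc_add_le {M : Type*} [AddCommMonoid M] [LinearOrder M]
    (hstrict : ∀ a b c : M, a < b → a + c < b + c)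
    {n : ℕ} (A B : Fin n → M) :
    LexLeFin (sortDesc (A + B)) (sortDesc A + sortDesc B) := by
  obtain ⟨p, hp⟩ :=
    Finite.exists_max fun p : Perm (Fin n) × Perm (Fin n) => toLex (A ∘ p.1 + B ∘ p.2)
  have hA : A ∘ p.1 = sortDesc A :=
    comp_eq_sortDesc_of_antitone <| antitone_of_forall_toLex_comp_swap_add_le hstrict
      (g := B ∘ p.2) fun i j => hp (p.1 * swap i j, p.2)
  have hB : B ∘ p.2 = sortDesc B :=
    comp_eq_sortDesc_of_antitone <| antitone_of_forall_toLex_comp_swap_add_le hstrict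
      (g := A ∘ p.1) fun i j => by
        rw [add_comm, add_comm (B ∘ p.2)]
        exact hp (p.1, p.2 * swap i j)
  let σ := Tuple.sort fun i => OrderDual.toDual ((A + B) i)
  apply lexLeFin_of_toLex_le
  rw [← hA, ← hB]
  exact hp (σ, σ)
end

section
/- Let α be a linear order and let M be an m × n matrix with entries in α (a function Fin m → Fin n → α). Let rowSort(M) be the matrix obtained from M by rearranging each row into nonincreasing order (left to right), and let colSort(M) be the matrix obtained by rearranging each column into nonincreasing order (top to bottom). Then colSort(rowSort(M)) ≤ rowSort(colSort(M)) in the row-major lexicographic order on matrices. -/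
/-- Rearrange each row of a matrix into nonincreasing order (left to right). -/
noncomputable def rowSort {α : Type*} [LinearOrder α] {m n : ℕ}
    (M : Fin m → Fin n → α) : Fin m → Fin n → α :=
  fun i => sortDesc (M i)

/-- Rearrange each column of a matrix into nonincreasing order (top to bottom). -/
noncomputable def colSort {α : Type*} [LinearOrder α] {m n : ℕ}
    (M : Fin m → Fin n → α) : Fin m → Fin n → α :=
  fun i j => sortDesc (fun i' => M i' j) i

/-- The row-major lexicographic order on matrices: `M ≤ N` iff `M = N` or, at the first
position (reading rows top to bottom and each row left to right) where they differ,
the entry of `M` is smaller. -/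
def MatLexLe {α : Type*} [LinearOrder α] {m n : ℕ} (M N : Fin m → Fin n → α) : Prop :=
  M = N ∨ ∃ i j, (∀ i', i' < i → M i' = N i') ∧ (∀ j', j' < j → M i j' = N i j') ∧
    M i j < N i j

open Finset

section SortDesc

variable {α : Type*} [LinearOrder α] {n : ℕ}

lemma sortDesc_antitone (X : Fin n → α) : Antitone (sortDesc X) :=
  fun _ _ hij => Tuple.monotone_sort (fun i => OrderDual.toDual (X i)) hij

lemma card_filter_le_sortDesc (X : Fin n → α) (t : α) :
    #{j | t ≤ sortDesc X j} = #{j | t ≤ X j} :=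
  card_equiv (Tuple.sort fun i => OrderDual.toDual (X i)) fun i => by
    simp only [mem_filter, mem_univ, true_and]; rfl

lemma Antitone.le_iff_lt_card_filter_le {Y : Fin n → α} (hY : Antitone Y) (t : α) (i : Fin n) :
    t ≤ Y i ↔ (i : ℕ) < #{j | t ≤ Y j} := by
  constructor
  · intro h
    have : Iic i ⊆ ({j | t ≤ Y j} : Finset (Fin n)) := fun j hj =>
      mem_filter.2 ⟨mem_univ j, h.trans (hY (mem_Iic.1 hj))⟩
    simpa using card_le_card this
  · intro h
    by_contra hlt
    have : ({j | t ≤ Y j} : Finset (Fin n)) ⊆ Iio i := fun j hj =>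
      mem_Iio.2 (lt_of_not_ge fun hij => hlt ((mem_filter.1 hj).2.trans (hY hij)))
    simpa using h.trans_le (card_le_card this)

lemma le_sortDesc_iff (X : Fin n → α) (t : α) (i : Fin n) :
    t ≤ sortDesc X i ↔ (i : ℕ) < #{j | t ≤ X j} :=
  card_filter_le_sortDesc X t ▸ (sortDesc_antitone X).le_iff_lt_card_filter_le t i

end SortDesc

lemma matLexLe_iff_toLex_le {α : Type*} [LinearOrder α] {m n : ℕ}
    {M N : Fin m → Fin n → α} :
    MatLexLe M N ↔ toLex (fun i => toLex (M i)) ≤ toLex (fun i => toLex (N i)) := by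
  rw [le_iff_eq_or_lt, MatLexLe]
  exact or_congr (by simp [funext_iff])
    ⟨fun ⟨i, j, hi, hj, h⟩ => ⟨i, hi, j, hj, h⟩,
      fun ⟨i, hi, j, hj, h⟩ => ⟨i, j, hi, hj, h⟩⟩

lemma Fin.sum_Iic_card_val_lt {m : ℕ} {ι : Type*} [Fintype ι] (c : ι → ℕ) (k : Fin m) :
    ∑ i ∈ Iic k, #{j | (i : ℕ) < c j} = ∑ j, min ((k : ℕ) + 1) (c j) := by
  refine (sum_card_bipartiteAbove_eq_sum_card_bipartiteBelow
    fun (i : Fin m) j => (i : ℕ) < c j).trans (sum_congr rfl fun j _ => ?_)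
  have : (Iic k).bipartiteBelow (fun (i : Fin m) j => (i : ℕ) < c j) j
      = ({i | (i : ℕ) < min ((k : ℕ) + 1) (c j)} : Finset (Fin m)) := by
    ext i
    simp only [mem_bipartiteBelow, mem_Iic, mem_filter, mem_univ, true_and, le_def]
    omega
  rw [this, Fin.card_filter_val_lt]
  exact min_eq_right ((min_le_left _ _).trans k.isLt)

section Counts

variable {α : Type*} [LinearOrder α] {m n : ℕ}

def rowCount (M : Fin m → Fin n → α) (t : α) (i : Fin m) : ℕ := #{j | t ≤ M i j}

def colCount (M : Fin m → Fin n → α) (t : α) (j : Fin n) : ℕ := #{i | t ≤ M i j}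

lemma rowCount_le (M : Fin m → Fin n → α) (t : α) (i : Fin m) : rowCount M t i ≤ n :=
  (card_filter_le _ _).trans_eq (card_fin n)

lemma le_rowSort_iff (M : Fin m → Fin n → α) (t : α) (i : Fin m) (j : Fin n) :
    t ≤ rowSort M i j ↔ (j : ℕ) < rowCount M t i :=
  le_sortDesc_iff _ _ _

lemma le_colSort_iff (M : Fin m → Fin n → α) (t : α) (i : Fin m) (j : Fin n) :
    t ≤ colSort M i j ↔ (i : ℕ) < colCount M t j :=
  le_sortDesc_iff _ _ _

lemma rowCount_rowSort (M : Fin m → Fin n → α) (t : α) :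
    rowCount (rowSort M) t = rowCount M t :=
  funext fun i => card_filter_le_sortDesc (M i) t

lemma le_colSort_rowSort_iff (M : Fin m → Fin n → α) (t : α) (i : Fin m) (j : Fin n) :
    t ≤ colSort (rowSort M) i j ↔ (j : ℕ) < sortDesc (rowCount M t) i := by
  rw [le_colSort_iff, ← Nat.add_one_le_iff (n := j), le_sortDesc_iff, colCount]
  simp_rw [le_rowSort_iff, Nat.add_one_le_iff]

lemma rowCount_colSort_rowSort (M : Fin m → Fin n → α) (t : α) :
    rowCount (colSort (rowSort M)) t = sortDesc (rowCount M t) := by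
  ext i
  simp_rw [rowCount, le_colSort_rowSort_iff, Fin.card_filter_val_lt]
  exact min_eq_right (rowCount_le M t _)

lemma rowCount_rowSort_colSort (M : Fin m → Fin n → α) (t : α) (i : Fin m) :
    rowCount (rowSort (colSort M)) t i = #{j | (i : ℕ) < colCount M t j} := by
  simp_rw [rowCount_rowSort, rowCount, le_colSort_iff]

lemma sum_rowCount_le_sum_min_colCount (M : Fin m → Fin n → α) (t : α) (I : Finset (Fin m)) :
    ∑ i ∈ I, rowCount M t i ≤ ∑ j, min #I (colCount M t j) :=
  calc ∑ i ∈ I, rowCount M t i = ∑ j, #{i ∈ I | t ≤ M i j} :=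
        sum_card_bipartiteAbove_eq_sum_card_bipartiteBelow _
    _ ≤ ∑ j, min #I (colCount M t j) := sum_le_sum fun _ _ =>
        le_min (card_filter_le _ _) (card_le_card (filter_subset_filter _ (subset_univ I)))

lemma sum_Iic_rowCount_colSort_rowSort_le (M : Fin m → Fin n → α) (t : α) (k : Fin m) :
    ∑ i ∈ Iic k, rowCount (colSort (rowSort M)) t i
      ≤ ∑ i ∈ Iic k, rowCount (rowSort (colSort M)) t i := by
  set σ := Tuple.sort fun i => OrderDual.toDual (rowCount M t i)
  simp_rw [rowCount_colSort_rowSort, rowCount_rowSort_colSort, Fin.sum_Iic_card_val_lt]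
  calc ∑ i ∈ Iic k, sortDesc (rowCount M t) i
      = ∑ i ∈ (Iic k).map σ.toEmbedding, rowCount M t i :=
        (sum_map (Iic k) σ.toEmbedding (rowCount M t)).symm
    _ ≤ ∑ j, min #((Iic k).map σ.toEmbedding) (colCount M t j) :=
        sum_rowCount_le_sum_min_colCount M t _
    _ = ∑ j, min ((k : ℕ) + 1) (colCount M t j) := by rw [card_map, Fin.card_Iic]

end Counts

/-- sorting rows first and then columns is lexicographically at most sorting
columns first and then rows. -/
theorem colSort_rowSort_le_rowSort_colSort {α : Type*} [LinearOrder α] {m n : ℕ}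
    (M : Fin m → Fin n → α) :
    MatLexLe (colSort (rowSort M)) (rowSort (colSort M)) := by
  set A := colSort (rowSort M)
  set B := rowSort (colSort M)
  -- `B` lexicographically below `A`, first differing at `(i₀, j₀)`
  refine matLexLe_iff_toLex_le.2 (not_lt.1 fun ⟨i₀, hprefix, j₀, _, hlt⟩ => ?_)
  set t := A i₀ j₀
  have hA : (j₀ : ℕ) < rowCount A t i₀ := by
    rw [rowCount_colSort_rowSort, ← le_colSort_rowSort_iff]
  have hB : rowCount B t i₀ ≤ j₀ := by
    rw [rowCount_rowSort, ← not_lt, ← le_rowSort_iff]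
    exact hlt.not_ge
  have hrows : ∀ i ∈ Iio i₀, rowCount A t i = rowCount B t i := fun i hi => by
    rw [rowCount, rowCount, show A i = B i from (hprefix i (mem_Iio.1 hi)).symm]
  have hsum : ∑ i ∈ Iic i₀, rowCount A t i ≤ ∑ i ∈ Iic i₀, rowCount B t i :=
    sum_Iic_rowCount_colSort_rowSort_le M t i₀
  rw [← Iio_insert, sum_insert notMem_Iio_self, sum_insert notMem_Iio_self,
    sum_congr rfl hrows, add_le_add_iff_right] at hsum
  omega
end

section
/- Let M and N be m × n matrices with entries in ℕ. Let colSort(X) denote the matrix obtained from X by rearranging each column into nonincreasing order (top to bottom). Then colSort(M + N) ≤ colSort(M) + colSort(N) in the row-major lexicographic order on matrices, where + denotes entrywise addition. -/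
/-!
Fix a column with entries `a` from `M` and `b` from `N`. The `k + 1` largest entries of `a + b`
sit at some `k + 1` rows, and there `a` and `b` sum to at most their own `k + 1` largest entries;
so the prefix sums of the sorted column of `a + b` are dominated by those of
`sortDesc a + sortDesc b`. Where the two sorted columns agree above row `i`, comparing the prefix
sums up to row `i` gives the inequality at row `i`, and this is exactly what the row-major
lexicographic order asks for at the first entry where the two matrices differ.
-/

open Finset

theorem antitone_sortDesc {α : Type*} [LinearOrder α] {n : ℕ} (a : Fin n → α) :
    Antitone (sortDesc a) :=
  fun _ _ hij => Tuple.monotone_sort (fun i => OrderDual.toDual (a i)) hij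

section Majorization

variable {α : Type*} [AddCommMonoid α] [LinearOrder α] [IsOrderedCancelAddMonoid α]

theorem Finset.sum_le_sum_of_card_eq_of_forall_sdiff_le {ι : Type*} [DecidableEq ι]
    {s t : Finset ι} {f : ι → α} (hcard : #s = #t) (h : ∀ i ∈ s \ t, ∀ j ∈ t \ s, f i ≤ f j) :
    ∑ i ∈ s, f i ≤ ∑ i ∈ t, f i := by
  rw [← sum_sdiff_le_sum_sdiff]
  rcases (s \ t).eq_empty_or_nonempty with hempty | hne
  · have : t \ s = ∅ := by
      rw [← card_eq_zero, ← card_sdiff_comm hcard, hempty, card_empty]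
    simp [hempty, this]
  · calc ∑ i ∈ s \ t, f i ≤ #(s \ t) • (s \ t).sup' hne f :=
          sum_le_card_nsmul _ _ _ fun i hi => le_sup' f hi
      _ = #(t \ s) • (s \ t).sup' hne f := by rw [card_sdiff_comm hcard]
      _ ≤ ∑ j ∈ t \ s, f j :=
          card_nsmul_le_sum _ _ _ fun j hj => sup'_le _ _ fun i hi => h i hi j hj

theorem Antitone.sum_le_sum_Iic {ι : Type*} [LinearOrder ι] [LocallyFiniteOrderBot ι]
    {f : ι → α} (hf : Antitone f) {t : Finset ι} {k : ι} (ht : #t = #(Iic k)) :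
    ∑ i ∈ t, f i ≤ ∑ i ∈ Iic k, f i :=
  sum_le_sum_of_card_eq_of_forall_sdiff_le ht fun i hi j hj => by
    simp only [mem_sdiff, mem_Iic, not_le] at hi hj
    exact hf (hj.1.trans hi.2.le)

theorem sum_le_sum_Iic_sortDesc {n : ℕ} (a : Fin n → α) {t : Finset (Fin n)} {k : Fin n}
    (ht : #t = #(Iic k)) : ∑ i ∈ t, a i ≤ ∑ i ∈ Iic k, sortDesc a i := by
  set σ := Tuple.sort fun i => OrderDual.toDual (a i)
  calc ∑ i ∈ t, a i = ∑ i ∈ t.map σ.symm.toEmbedding, sortDesc a i := by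
        simp [sum_map, sortDesc, σ]
    _ ≤ ∑ i ∈ Iic k, sortDesc a i := (antitone_sortDesc a).sum_le_sum_Iic (by simpa using ht)

theorem sum_Iic_sortDesc_add_le {n : ℕ} (a b : Fin n → α) (k : Fin n) :
    ∑ i ∈ Iic k, sortDesc (a + b) i ≤ ∑ i ∈ Iic k, (sortDesc a i + sortDesc b i) := by
  set τ := Tuple.sort fun i => OrderDual.toDual ((a + b) i)
  set t := (Iic k).map τ.toEmbedding
  have ht : #t = #(Iic k) := card_map _
  calc ∑ i ∈ Iic k, sortDesc (a + b) i = ∑ i ∈ t, a i + ∑ i ∈ t, b i := by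
        rw [← sum_add_distrib, sum_map]; rfl
    _ ≤ ∑ i ∈ Iic k, (sortDesc a i + sortDesc b i) := by
        rw [sum_add_distrib]
        exact add_le_add (sum_le_sum_Iic_sortDesc a ht) (sum_le_sum_Iic_sortDesc b ht)

theorem sortDesc_add_le_of_forall_lt_eq {n : ℕ} (a b : Fin n → α) (k : Fin n)
    (h : ∀ i < k, sortDesc (a + b) i = sortDesc a i + sortDesc b i) :
    sortDesc (a + b) k ≤ sortDesc a k + sortDesc b k := by
  have hsum := sum_Iic_sortDesc_add_le a b k
  rw [← Iio_insert, sum_insert notMem_Iio_self, sum_insert notMem_Iio_self,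
    sum_congr rfl fun i hi => h i (mem_Iio.1 hi)] at hsum
  exact le_of_add_le_add_right hsum

end Majorization

theorem Function.exists_forall_lt_eq_and_ne {ι β : Type*} [LT ι] [WellFoundedLT ι]
    {x y : ι → β} (h : x ≠ y) : ∃ i, (∀ j < i, x j = y j) ∧ x i ≠ y i := by
  obtain ⟨i, hi, hmin⟩ := wellFounded_lt.has_min {i | x i ≠ y i} (Function.ne_iff.1 h)
  exact ⟨i, fun j hj => not_not.1 fun hne => hmin j hne hj, hi⟩

theorem matLexLe_of_forall_eq_above_imp_le {α : Type*} [LinearOrder α] {m n : ℕ}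
    {M N : Fin m → Fin n → α} (h : ∀ i j, (∀ i' < i, M i' j = N i' j) → M i j ≤ N i j) :
    MatLexLe M N := by
  by_cases hMN : M = N
  · exact .inl hMN
  obtain ⟨i, hrows, hrow⟩ := Function.exists_forall_lt_eq_and_ne hMN
  obtain ⟨j, hcols, hentry⟩ := Function.exists_forall_lt_eq_and_ne hrow
  exact .inr ⟨i, j, hrows, hcols,
    (h i j fun i' hi' => congrFun (hrows i' hi') j).lt_of_ne hentry⟩

/-- column sorting and entrywise addition of `ℕ`-matrices satisfy
`colSort (M + N) ≤ colSort M + colSort N` in the row-major lexicographic order. -/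
theorem colSort_add_interchange {m n : ℕ} (M N : Fin m → Fin n → ℕ) :
    MatLexLe (colSort (M + N)) (colSort M + colSort N) :=
  matLexLe_of_forall_eq_above_imp_le fun i j hcol =>
    sortDesc_add_le_of_forall_lt_eq (fun i' => M i' j) (fun i' => N i' j) i hcol
end

section
/- Let k ≥ 2 and let a : ℕ → ℕ satisfy a(0) = 0, a(1) = 0, and the following: for all i, j with 0 ≤ i, j ≤ k−1, if i + j < k then a(i) + a(j) ≤ a(i+j), and if i + j ≥ k then a(i) + a(j) ≤ a(i+j−k) + a(k). Define g : ℕ → ℕ by g(n) = a(n mod k) + (n div k)·a(k). Then: (1) g(n) = a(n) for all 0 ≤ n ≤ k; (2) g(1) = 0 and g(m+n) ≥ g(m) + g(n) for all m, n; (3) for every f : ℕ → ℕ with f(1) = 0, f(i) = a(i) for 1 ≤ i ≤ k, and f(m+n) ≥ f(m) + f(n) for all m, n ≥ 1, one has g(n) ≤ f(n) for all n ≥ 1. -/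
/-!
Write `n = p * k + q` with `0 ≤ q < k`. Adding `m` and `n` adds the quotients and the residues,
with at most one carry; the two conditions on `a` are exactly superadditivity of
`a q + p * a k` in the no-carry and in the carry case. Minimality follows by peeling off
copies of `k`, since any superadditive `f` agreeing with `a` on `1, …, k` has
`f n ≥ f (n - k) + a k`.
-/

def superadditiveExtension (a : ℕ → ℕ) (k n : ℕ) : ℕ :=
  a (n % k) + n / k * a k

namespace superadditiveExtension

variable {a : ℕ → ℕ} {k : ℕ}

theorem add_mul (hk : 0 < k) {r : ℕ} (hr : r < k) (p : ℕ) :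
    superadditiveExtension a k (r + p * k) = a r + p * a k := by
  simp [superadditiveExtension, Nat.add_mul_mod_self_right, Nat.add_mul_div_right _ _ hk,
    Nat.mod_eq_of_lt hr, Nat.div_eq_of_lt hr]

theorem eq_of_le (hk : 0 < k) (ha0 : a 0 = 0) {n : ℕ} (hn : n ≤ k) :
    superadditiveExtension a k n = a n := by
  rcases hn.lt_or_eq with hn | rfl
  · simpa using add_mul (a := a) hk hn 0
  · simpa [ha0] using add_mul (a := a) hk hk 1

theorem add_self (hk : 0 < k) (n : ℕ) :
    superadditiveExtension a k (n + k) =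
      superadditiveExtension a k n + a k := by
  simp only [superadditiveExtension, Nat.add_mod_right, Nat.add_div_right _ hk]
  ring

theorem add_le (hk : 0 < k)
    (hin : ∀ i j, i < k → j < k → i + j < k → a i + a j ≤ a (i + j))
    (hwrap : ∀ i j, i < k → j < k → k ≤ i + j → a i + a j ≤ a (i + j - k) + a k)
    (m n : ℕ) :
    superadditiveExtension a k m + superadditiveExtension a k n ≤
      superadditiveExtension a k (m + n) := by
  have hm := Nat.mod_lt m hk
  have hn := Nat.mod_lt n hk
  have hm_eq := add_mul (a := a) hk hm (m / k)
  have hn_eq := add_mul (a := a) hk hn (n / k)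
  rw [Nat.mod_add_div'] at hm_eq hn_eq
  rw [hm_eq, hn_eq]
  by_cases hcarry : m % k + n % k < k
  · have hmn : m + n = (m % k + n % k) + (m / k + n / k) * k := by
      linarith [Nat.mod_add_div' m k, Nat.mod_add_div' n k]
    rw [hmn, add_mul hk hcarry]
    linarith [hin _ _ hm hn hcarry]
  · rw [not_lt] at hcarry
    have hmn : m + n = (m % k + n % k - k) + (m / k + n / k + 1) * k := by
      have := Nat.mod_add_div' m k
      have := Nat.mod_add_div' n k
      rw [Nat.add_mul, Nat.add_mul]
      omega
    rw [hmn, add_mul hk (by omega)]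
    linarith [hwrap _ _ hm hn hcarry]

theorem le_of_superadditive (hk : 0 < k) (ha0 : a 0 = 0) {f : ℕ → ℕ}
    (hfa : ∀ i, 1 ≤ i → i ≤ k → f i = a i)
    (hf : ∀ m n, 1 ≤ m → 1 ≤ n → f m + f n ≤ f (m + n)) :
    ∀ n, 1 ≤ n → superadditiveExtension a k n ≤ f n := by
  intro n
  induction n using Nat.strong_induction_on with
  | _ n ih =>
    intro hn
    by_cases hnk : n ≤ k
    · rw [eq_of_le hk ha0 hnk, hfa n hn hnk]
    · obtain ⟨r, rfl⟩ : ∃ r, n = r + k := ⟨n - k, by omega⟩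
      calc superadditiveExtension a k (r + k)
          = superadditiveExtension a k r + f k := by rw [add_self hk, hfa k hk le_rfl]
        _ ≤ f r + f k := Nat.add_le_add_right (ih r (by omega) (by omega)) _
        _ ≤ f (r + k) := hf r k (by omega) hk

end superadditiveExtension

/-- the minimal 2-fold operad in `(ℕ, max, +)` with starting terms
`0, a 2, …, a k` is given by `g n = a (n % k) + (n / k) * a k`. -/
theorem minimal_operad_formula (k : ℕ) (hk : 2 ≤ k) (a : ℕ → ℕ)
    (ha0 : a 0 = 0) (ha1 : a 1 = 0)
    (hin : ∀ i j, i < k → j < k → i + j < k → a i + a j ≤ a (i + j))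
    (hwrap : ∀ i j, i < k → j < k → k ≤ i + j → a i + a j ≤ a (i + j - k) + a k)
    (g : ℕ → ℕ) (hg : ∀ n, g n = a (n % k) + (n / k) * a k) :
    (∀ n, n ≤ k → g n = a n) ∧
      (g 1 = 0 ∧ ∀ m n, g m + g n ≤ g (m + n)) ∧
      (∀ f : ℕ → ℕ, f 1 = 0 → (∀ i, 1 ≤ i → i ≤ k → f i = a i) →
        (∀ m n, 1 ≤ m → 1 ≤ n → f m + f n ≤ f (m + n)) →
        ∀ n, 1 ≤ n → g n ≤ f n) := by
  obtain rfl : g = superadditiveExtension a k := funext hg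
  have hk0 : 0 < k := by omega
  have hstart : ∀ n, n ≤ k → superadditiveExtension a k n = a n :=
    fun _ => superadditiveExtension.eq_of_le hk0 ha0
  refine ⟨hstart, ⟨?_, superadditiveExtension.add_le hk0 hin hwrap⟩, ?_⟩
  · rw [hstart 1 (by omega), ha1]
  · intro f _ hfa hf
    exact superadditiveExtension.le_of_superadditive hk0 ha0 hfa hf
end

section
/- Let k ≥ 2 and a ∈ ℕ. Define g : ℕ → ℕ by g(n) = (n div k)·a. Then g(1) = 0, g(i) = 0 for 1 ≤ i < k, g(k) = a, g(m+n) ≥ g(m) + g(n) for all m, n, and g is minimal with these properties: every f : ℕ → ℕ with f(1) = 0, f(i) = 0 for 1 ≤ i < k, f(k) = a, and f(m+n) ≥ f(m) + f(n) for all m, n ≥ 1 satisfies g(n) ≤ f(n) for all n ≥ 1. -/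
/-!
`n ↦ (n / k) * a` is superadditive because `⌊m/k⌋ + ⌊n/k⌋ ≤ ⌊(m+n)/k⌋`. Conversely, a function
`f` superadditive on positive arguments satisfies `f (q * k + r) ≥ q * f k` (peel off one copy of
`k` at a time), and writing `n = (n / k) * k + n % k` gives `(n / k) * f k ≤ f n`.
-/

section Superadditive

variable {f : ℕ → ℕ} {k : ℕ}

theorem mul_apply_le_apply_mul_add
    (hf : ∀ m n, 1 ≤ m → 1 ≤ n → f m + f n ≤ f (m + n)) (hk : 1 ≤ k) :
    ∀ q r, 1 ≤ q * k + r → q * f k ≤ f (q * k + r) := by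
  intro q
  induction q with
  | zero => simp
  | succ q ih =>
    intro r _
    rcases Nat.eq_zero_or_pos (q * k + r) with hzero | hpos
    · obtain ⟨hqk, rfl⟩ := Nat.add_eq_zero_iff.mp hzero
      obtain rfl : q = 0 := (mul_eq_zero.mp hqk).resolve_right (by omega)
      simp
    · calc (q + 1) * f k = f k + q * f k := by ring
        _ ≤ f k + f (q * k + r) := Nat.add_le_add_left (ih r hpos) _
        _ ≤ f (k + (q * k + r)) := hf k _ hk hpos
        _ = f ((q + 1) * k + r) := by ring_nf

theorem div_mul_apply_le (hf : ∀ m n, 1 ≤ m → 1 ≤ n → f m + f n ≤ f (m + n))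
    (hk : 1 ≤ k) {n : ℕ} (hn : 1 ≤ n) : n / k * f k ≤ f n := by
  have h := mul_apply_le_apply_mul_add hf hk (n / k) (n % k)
  rw [Nat.div_add_mod'] at h
  exact h hn

end Superadditive

theorem div_mul_add_div_mul_le (m n k a : ℕ) : m / k * a + n / k * a ≤ (m + n) / k * a := by
  rw [← Nat.add_mul]
  exact Nat.mul_le_mul_right a Nat.div_add_div_le_add_div

/-- the minimal 2-fold operad in `(ℕ, max, +)` with starting terms
`0, …, 0, a` (value `a` at `k`) is `g n = (n / k) * a`. -/
theorem minimal_operad_zero_start (k : ℕ) (hk : 2 ≤ k) (a : ℕ)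
    (g : ℕ → ℕ) (hg : ∀ n, g n = (n / k) * a) :
    g 1 = 0 ∧ (∀ i, 1 ≤ i → i < k → g i = 0) ∧ g k = a ∧
      (∀ m n, g m + g n ≤ g (m + n)) ∧
      (∀ f : ℕ → ℕ, f 1 = 0 → (∀ i, 1 ≤ i → i < k → f i = 0) → f k = a →
        (∀ m n, 1 ≤ m → 1 ≤ n → f m + f n ≤ f (m + n)) →
        ∀ n, 1 ≤ n → g n ≤ f n) := by
  obtain rfl : g = fun n => n / k * a := funext hg
  refine ⟨?_, fun i _ hi => ?_, ?_, fun m n => div_mul_add_div_mul_le m n k a, ?_⟩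
  · simp [Nat.div_eq_of_lt (by omega : 1 < k)]
  · simp [Nat.div_eq_of_lt hi]
  · simp [Nat.div_self (by omega : 0 < k)]
  · rintro f - - rfl hf n hn
    exact div_mul_apply_le hf (by omega) hn
end
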